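/- Let H = Φ T where T = (A_{i−j})_{i,j=1}^N is an mN×mN block Toeplitz matrix with m×m blocks A_s, and Φ = P ⊗ I_m with P the N×N exchange (anti-identity) matrix. Then for even k, tr(H^k) = Σ_{i=1}^N Σ_{j_1,...,j_k=−(N−1)}^{N−1} tr(A_{j_1}···A_{j_k}) · Π_{l=1}^k 1_{[1,N]}(i − Σ_{q=1}^l (−1)^q j_q) · δ_{0, Σ_{q=1}^k (−1)^q j_q}. -/

import Mathlib

open Matrix
open scoped Kronecker BigOperators

/-- the `N × N` upper (backward) shift matrix `B = (δ_{i+1,j})` (1's on the superdiagonal) -/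
def shiftB (N : ℕ) : Matrix (Fin N) (Fin N) ℝ :=
  Matrix.of fun i j => if (i : ℕ) + 1 = (j : ℕ) then 1 else 0

/-- the `N × N` lower (forward) shift matrix `F = (δ_{i,j+1})` (1's on the subdiagonal) -/
def shiftF (N : ℕ) : Matrix (Fin N) (Fin N) ℝ :=
  Matrix.of fun i j => if (i : ℕ) = (j : ℕ) + 1 then 1 else 0

/-- the `N × N` exchange (anti-identity) permutation matrix `P`, `P e_i = e_{N+1-i}` -/
def exchP (N : ℕ) : Matrix (Fin N) (Fin N) ℝ :=
  Matrix.of fun i j => if (i : ℕ) + (j : ℕ) + 1 = N then 1 else 0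

/-- the `mN × mN` block Toeplitz matrix whose `(i,j)` block is `A (i - j)` -/
def blockToeplitz (N m : ℕ) (A : ℤ → Matrix (Fin m) (Fin m) ℝ) :
    Matrix (Fin N × Fin m) (Fin N × Fin m) ℝ :=
  Matrix.of fun x y => A ((x.1 : ℤ) - (y.1 : ℤ)) x.2 y.2

/-! Conjugating by `Φ = P ⊗ I_m` reverses block rows and columns, so `Φ T Φ = T̃`, the block
Toeplitz matrix with blocks `A_{j-i}`; hence `H² = T̃ T` and, `k` being even, `H^k` is the
alternating product `T̃ T T̃ T ⋯` of `k` factors. Expanding the trace of a product of block matrices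
gives a sum, over closed walks `v_0, …, v_k = v_0` in the block indices, of
`tr(A_{j_1} ⋯ A_{j_k})` with `j_l = (-1)^(l-1) (v_l - v_{l-1})`. Such a walk is recovered from
`i = v_0 + 1` and `j` through `v_l = i - 1 - ∑_{q ≤ l} (-1)^q j_q`, and the indicator factors of
the formula say exactly that this sequence stays in `{0, …, N-1}` and closes up. -/

open Finset

namespace Matrix

variable {ι κ : Type*} [Fintype ι] [Fintype κ]

theorem trace_comp {R : Type*} [AddCommMonoid R] (M : Matrix ι ι (Matrix κ κ R)) :
    (comp ι ι κ κ R M).trace = ∑ i, (M i i).trace :=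
  Fintype.sum_prod_type _

variable [DecidableEq ι]

theorem list_prod_ofFn_apply {α : Type*} [Semiring α] {n : ℕ} (M : Fin n → Matrix ι ι α)
    (a b : ι) :
    (List.ofFn M).prod a b =
      ∑ v : Fin (n + 1) → ι, if v 0 = a ∧ v (Fin.last n) = b
        then (List.ofFn fun l => M l (v l.castSucc) (v l.succ)).prod else 0 := by
  induction n generalizing a with
  | zero =>
    rw [← (Equiv.funUnique (Fin 1) ι).symm.sum_comp]
    simp [one_apply, ite_and]
  | succ n ih =>
    rw [List.ofFn_succ, List.prod_cons, mul_apply, ← (Fin.consEquiv fun _ => ι).sum_comp,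
      Fintype.sum_prod_type, sum_comm]
    simp only [ih, mul_sum]
    rw [sum_comm]
    refine sum_congr rfl fun v _ => ?_
    simp [ite_and, Fin.consEquiv_apply, ← Fin.succ_last]

theorem trace_comp_list_prod_ofFn {R : Type*} [Semiring R] [DecidableEq κ] {n : ℕ}
    (M : Fin n → Matrix ι ι (Matrix κ κ R)) :
    (comp ι ι κ κ R (List.ofFn M).prod).trace =
      ∑ v : Fin (n + 1) → ι, if v 0 = v (Fin.last n)
        then (List.ofFn fun l => M l (v l.castSucc) (v l.succ)).prod.trace else 0 := by
  simp only [trace_comp, list_prod_ofFn_apply, trace_sum, apply_ite trace, trace_zero]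
  rw [sum_comm]
  simp [ite_and, eq_comm]

end Matrix

theorem List.prod_ofFn_of_periodic {M : Type*} [Monoid M] {f : ℕ → M}
    (hf : Function.Periodic f 2) (r : ℕ) :
    (List.ofFn fun l : Fin (2 * r) => f l).prod = (f 0 * f 1) ^ r := by
  induction r with
  | zero => simp
  | succ r ih =>
    rw [List.ofFn_succ, List.ofFn_succ]
    simp only [Fin.val_succ, Fin.val_zero]
    simp [hf _, ih, pow_succ', mul_assoc]

theorem Fin.sum_univ_sub {G : Type*} [AddCommGroup G] {k : ℕ} (f : Fin (k + 1) → G) :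
    ∑ i : Fin k, (f i.succ - f i.castSucc) = f (Fin.last k) - f 0 := by
  cases k with
  | zero => simp
  | succ n => rw [← Fin.succ_last, ← Fin.sum_Iic_sub, ← Fin.top_eq_last, Finset.Iic_top]

section Walks

variable {k N : ℕ}

def altSteps (u : Fin (k + 1) → ℤ) (l : Fin k) : ℤ :=
  (-1) ^ (l : ℕ) * (u l.succ - u l.castSucc)

theorem neg_one_pow_succ_mul_altSteps (u : Fin (k + 1) → ℤ) (l : Fin k) :
    (-1) ^ ((l : ℕ) + 1) * altSteps u l = u l.castSucc - u l.succ := by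
  rcases neg_one_pow_eq_or ℤ (l : ℕ) with h | h <;> simp [altSteps, pow_succ, h]

theorem sum_Iic_altSteps (u : Fin (k + 1) → ℤ) (l : Fin k) :
    ∑ q ∈ Iic l, (-1) ^ ((q : ℕ) + 1) * altSteps u q = u 0 - u l.succ := by
  simp only [neg_one_pow_succ_mul_altSteps]
  rw [← neg_sub, ← Fin.sum_Iic_sub, ← sum_neg_distrib]
  simp

theorem sum_altSteps (u : Fin (k + 1) → ℤ) :
    ∑ q : Fin k, (-1) ^ ((q : ℕ) + 1) * altSteps u q = u 0 - u (Fin.last k) := by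
  simp only [neg_one_pow_succ_mul_altSteps]
  rw [← neg_sub, ← Fin.sum_univ_sub, ← sum_neg_distrib]
  simp

theorem eq_of_altSteps_eq {u w : Fin (k + 1) → ℤ} (h0 : u 0 = w 0)
    (h : altSteps u = altSteps w) : u = w := by
  funext t
  induction t using Fin.cases with
  | zero => exact h0
  | succ l => linarith [sum_Iic_altSteps u l, sum_Iic_altSteps w l, congrArg (fun j =>
      ∑ q ∈ Iic l, (-1) ^ ((q : ℕ) + 1) * j (q : Fin k)) h]

theorem exists_altSteps_eq (c : ℤ) (j : Fin k → ℤ) :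
    ∃ u : Fin (k + 1) → ℤ, u 0 = c ∧ altSteps u = j := by
  refine ⟨fun t => c - Fin.partialSum (fun q => (-1) ^ ((q : ℕ) + 1) * j q) t, by simp, ?_⟩
  funext l
  rcases neg_one_pow_eq_or ℤ (l : ℕ) with h | h <;>
    simp [altSteps, Fin.partialSum_succ, pow_succ, h]

theorem altSteps_mem_Icc (v : Fin (k + 1) → Fin N) (l : Fin k) :
    altSteps (fun t => (v t : ℤ)) l ∈ Icc (-(N : ℤ) + 1) (N - 1) := by
  have := (v l.succ).isLt
  have := (v l.castSucc).isLt
  rcases neg_one_pow_eq_or ℤ (l : ℕ) with h | h <;> simp [altSteps, h] <;> omega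

-- `(i, j)` in the notation of the trace formula: `i` is the starting block index, counted from 1.
def walkCode (v : Fin (k + 1) → Fin N) : ℤ × (Fin k → ℤ) :=
  ((v 0 : ℤ) + 1, altSteps fun t => (v t : ℤ))

theorem walkCode_injective : Function.Injective (walkCode (k := k) (N := N)) := by
  intro v w h
  simp only [walkCode, Prod.mk.injEq, add_left_inj] at h
  have hvw := eq_of_altSteps_eq (u := fun t => (v t : ℤ)) h.1 h.2
  exact funext fun t => Fin.ext (by exact_mod_cast congrFun hvw t)

theorem exists_closed_walkCode_eq_iff (i : ℤ) (j : Fin k → ℤ) :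
    (∃ v : Fin (k + 1) → Fin N, v 0 = v (Fin.last k) ∧ walkCode v = (i, j)) ↔
      (i ∈ Icc (1 : ℤ) N ∧ ∀ l, j l ∈ Icc (-(N : ℤ) + 1) (N - 1)) ∧
      (∀ l : Fin k, (1 : ℤ) ≤ i - (∑ q ∈ Iic l, (-1 : ℤ) ^ ((q : ℕ) + 1) * j q)
          ∧ i - (∑ q ∈ Iic l, (-1 : ℤ) ^ ((q : ℕ) + 1) * j q) ≤ N)
        ∧ (∑ q : Fin k, (-1 : ℤ) ^ ((q : ℕ) + 1) * j q) = 0 := by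
  constructor
  · rintro ⟨v, hv, hcode⟩
    obtain ⟨rfl, rfl⟩ := Prod.mk.inj hcode
    refine ⟨⟨by simp, altSteps_mem_Icc v⟩, fun l => ?_, by simp [sum_altSteps, hv]⟩
    simp only [sum_Iic_altSteps]
    omega
  · rintro ⟨⟨hi, -⟩, hpath, hclosed⟩
    obtain ⟨u, hu0, rfl⟩ := exists_altSteps_eq (i - 1) j
    rw [mem_Icc] at hi
    simp only [sum_Iic_altSteps] at hpath
    rw [sum_altSteps] at hclosed
    have hbound : ∀ t, 0 ≤ u t ∧ u t < N := fun t => by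
      induction t using Fin.cases with
      | zero => omega
      | succ l => have := hpath l; omega
    have hu : (fun t => (((⟨(u t).toNat, by have := hbound t; omega⟩ : Fin N)) : ℤ)) = u :=
      funext fun t => by simp [(hbound t).1]
    refine ⟨fun t => ⟨(u t).toNat, by have := hbound t; omega⟩, ?_, ?_⟩
    · ext; simp; omega
    · simp only [walkCode, hu]; simp; omega

theorem sum_closedWalks_eq_sum_walkCodes {R : Type*} [CommSemiring R] (F : (Fin k → ℤ) → R) :
    (∑ v : Fin (k + 1) → Fin N,
      if v 0 = v (Fin.last k) then F (altSteps fun t => (v t : ℤ)) else 0) =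
    ∑ i ∈ Icc (1 : ℤ) N,
      ∑ j ∈ Fintype.piFinset (fun _ : Fin k => Icc (-(N : ℤ) + 1) ((N : ℤ) - 1)),
        F j * (∏ l : Fin k,
            if (1 : ℤ) ≤ i - (∑ q ∈ Iic l, (-1 : ℤ) ^ ((q : ℕ) + 1) * j q)
                ∧ i - (∑ q ∈ Iic l, (-1 : ℤ) ^ ((q : ℕ) + 1) * j q) ≤ N
            then (1 : R) else 0)
          * (if (∑ q : Fin k, (-1 : ℤ) ^ ((q : ℕ) + 1) * j q) = 0 then (1 : R) else 0) := by
  simp only [Fintype.prod_boole, mul_ite, mul_one, mul_zero, ← ite_and]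
  rw [← sum_product', ← sum_filter, ← sum_filter]
  refine (sum_image (f := fun p => F p.2) walkCode_injective.injOn).symm.trans
    (sum_congr ?_ fun _ _ => rfl)
  ext ⟨i, j⟩
  simpa [and_comm, eq_comm] using exists_closed_walkCode_eq_iff (N := N) i j

end Walks

theorem exchP_apply {N : ℕ} (i j : Fin N) : exchP N i j = if j = i.rev then 1 else 0 := by
  simp only [exchP, of_apply, Fin.ext_iff, Fin.val_rev]
  congr 1
  grind

theorem exchP_kronecker_one_mul_apply {N m : ℕ} {γ : Type*} (M : Matrix (Fin N × Fin m) γ ℝ)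
    (x : Fin N) (a : Fin m) (y : γ) :
    ((exchP N ⊗ₖ (1 : Matrix (Fin m) (Fin m) ℝ)) * M) (x, a) y = M (x.rev, a) y := by
  simp [mul_apply, Fintype.sum_prod_type, exchP_apply, one_apply]

theorem mul_exchP_kronecker_one_apply {N m : ℕ} {γ : Type*} (M : Matrix γ (Fin N × Fin m) ℝ)
    (x : γ) (y : Fin N) (b : Fin m) :
    (M * (exchP N ⊗ₖ (1 : Matrix (Fin m) (Fin m) ℝ))) x (y, b) = M x (y.rev, b) := by
  simp [mul_apply, Fintype.sum_prod_type, exchP_apply, one_apply, eq_comm (a := y), Fin.rev_eq_iff]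

theorem exchP_kronecker_one_conj_blockToeplitz (N m : ℕ) (A : ℤ → Matrix (Fin m) (Fin m) ℝ) :
    (exchP N ⊗ₖ (1 : Matrix (Fin m) (Fin m) ℝ)) * blockToeplitz N m A *
        (exchP N ⊗ₖ (1 : Matrix (Fin m) (Fin m) ℝ)) =
      blockToeplitz N m fun s => A (-s) := by
  ext ⟨x, a⟩ ⟨y, b⟩
  rw [mul_exchP_kronecker_one_apply, exchP_kronecker_one_mul_apply]
  simp only [blockToeplitz, of_apply, Fin.val_rev]
  congr 2
  omega

theorem trace_pow_blockHankel_even (N m k : ℕ) (hk : Even k)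
    (A : ℤ → Matrix (Fin m) (Fin m) ℝ)
    (H : Matrix (Fin N × Fin m) (Fin N × Fin m) ℝ)
    (hH : H = ((exchP N) ⊗ₖ (1 : Matrix (Fin m) (Fin m) ℝ)) * blockToeplitz N m A) :
    (H ^ k).trace =
      ∑ i ∈ Finset.Icc (1 : ℤ) N,
        ∑ j ∈ Fintype.piFinset (fun _ : Fin k => Finset.Icc (-(N : ℤ) + 1) ((N : ℤ) - 1)),
          ((List.ofFn fun l => A (j l)).prod).trace
          * (∏ l : Fin k,
              if (1 : ℤ) ≤ i - (∑ q ∈ Finset.Iic l, (-1 : ℤ) ^ ((q : ℕ) + 1) * j q)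
                  ∧ i - (∑ q ∈ Finset.Iic l, (-1 : ℤ) ^ ((q : ℕ) + 1) * j q) ≤ N
              then (1 : ℝ) else 0)
          * (if (∑ q : Fin k, (-1 : ℤ) ^ ((q : ℕ) + 1) * j q) = 0 then (1 : ℝ) else 0) := by
  obtain ⟨r, rfl⟩ := even_iff_two_dvd.mp hk
  have hsq : H ^ 2 = blockToeplitz N m (fun s => A (-s)) * blockToeplitz N m A := by
    rw [sq, hH, ← mul_assoc, exchP_kronecker_one_conj_blockToeplitz]
  have hper : Function.Periodic
      (fun l : ℕ => of fun x y : Fin N => A ((-1) ^ l * ((y : ℤ) - x))) 2 := fun l => by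
    simp [pow_add]
  have hpow : H ^ (2 * r) = comp _ _ _ _ _ (List.ofFn fun l : Fin (2 * r) =>
      of fun x y : Fin N => A ((-1) ^ (l : ℕ) * ((y : ℤ) - x))).prod := by
    rw [pow_mul, hsq, List.prod_ofFn_of_periodic hper, ← compRingEquiv_apply, map_pow, map_mul]
    congr 2 <;> ext ⟨x, a⟩ ⟨y, b⟩ <;> simp [blockToeplitz]
  rw [hpow, trace_comp_list_prod_ofFn]
  exact sum_closedWalks_eq_sum_walkCodes fun j => (List.ofFn fun l => A (j l)).prod.trace
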